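/- Let G be a square-free graph. Let K=(K1,K2,K3,L,R) be an optimal good partition of G with K1≠∅ and K3≠∅, let Q=(Q1,Q3,x,y,C1,C3) be a frame for K with C1={c1} and C3={c3}, and let K'=(K1',K2',K3',L',R') be an almost good partition of G such that x∈L'⊆L, y∈R', K1⊆K1'⊆Q1∖Q3, K2=K2'=Q1∩Q3, K3⊆K3'⊆Q3∖Q1, c1 is maximal in K1', and c3 is maximal in K3'. Then: (1) if K' does not satisfy condition (iii) of the definition of a good partition, witnessed by vertices u∈K3' and v∈K1' and a chordless path P=u-u'-...-v'-v of length at least 2, with all interior vertices in L' and containing no vertex complete to K1', in the graph G' obtained from G by deleting the edge uv if it is present, and if P is chosen of minimal length among all such paths, then: if c1 is a neighbor of v' then (K1'∖N(v'))∩K1=∅, and if c1 is not a neighbor of v' then N(v')∩K1=∅; and (2) if K' satisfies condition (iii) but not condition (iv), so that there is an edge between K1' and K3' and some vertex u∈L' has neighbors in both K1' and K3', then N(u)∩K3=∅. -/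

import Mathlib

open SimpleGraph

namespace Paper

variable {V : Type*} {α : Type*}

/-- `S` is complete to `T`: every vertex of `S` is adjacent to every vertex of `T`. -/
def CompleteTo (G : SimpleGraph V) (S T : Set V) : Prop :=
  ∀ ⦃s⦄, s ∈ S → ∀ ⦃t⦄, t ∈ T → G.Adj s t

/-- `S` is anticomplete to `T`: there are no edges between `S` and `T`. -/
def AnticompleteTo (G : SimpleGraph V) (S T : Set V) : Prop :=
  ∀ ⦃s⦄, s ∈ S → ∀ ⦃t⦄, t ∈ T → ¬ G.Adj s t

/-- A vertex `v` is complete to a set `T`. -/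
def VertexCompleteTo (G : SimpleGraph V) (v : V) (T : Set V) : Prop :=
  ∀ ⦃t⦄, t ∈ T → G.Adj v t

/-- `G` has a hole (induced cycle) of length `n`. -/
def HasHole (G : SimpleGraph V) (n : ℕ) : Prop :=
  Nonempty (cycleGraph n ↪g G)

/-- `G` has no hole of odd length. -/
def NoOddHole (G : SimpleGraph V) : Prop :=
  ∀ n, 5 ≤ n → Odd n → ¬ HasHole G n

/-- `G` is Berge: no odd hole, no odd antihole. -/
def IsBerge (G : SimpleGraph V) : Prop :=
  NoOddHole G ∧ NoOddHole Gᶜ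

/-- `G` is square-free: no induced 4-cycle. -/
def SquareFree (G : SimpleGraph V) : Prop := ¬ HasHole G 4

/-- The list `p` of vertices is a chordless (induced) path of `G`. -/
def IsChordlessPath (G : SimpleGraph V) (p : List V) : Prop :=
  p.Chain' G.Adj ∧ p.Nodup ∧
    ∀ i j : Fin p.length, (i : ℕ) + 2 ≤ (j : ℕ) → ¬ G.Adj (p.get i) (p.get j)

/-- The interior vertices of a path given as a list. -/
def interior {β : Type*} (p : List β) : List β := p.tail.dropLast

/-- A triad: a set of three pairwise non-adjacent vertices. -/
def IsTriad (G : SimpleGraph V) (t : Set V) : Prop :=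
  ∃ a b c : V, a ≠ b ∧ a ≠ c ∧ b ≠ c ∧
    ¬ G.Adj a b ∧ ¬ G.Adj a c ∧ ¬ G.Adj b c ∧ t = {a, b, c}

/-- The graph obtained from `G` by deleting all edges between `A` and `B`. -/
def removeBetween (G : SimpleGraph V) (A B : Set V) : SimpleGraph V :=
  G.deleteEdges {e | ∃ x ∈ A, ∃ y ∈ B, e = s(x, y)}

/-- Condition (iii) of a good partition. -/
def Cond3 (G : SimpleGraph V) (K1 K3 L : Set V) : Prop :=
  ∀ (p : List V) (x y : V), IsChordlessPath (removeBetween G K1 K3) p →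
    p.head? = some x → p.getLast? = some y → x ∈ K1 → y ∈ K3 →
    (∀ v ∈ interior p, v ∈ L) →
    ∃ v ∈ p, v ∈ L ∧ VertexCompleteTo G v K1

/-- A good partition of `G`. -/
structure IsGoodPartition (G : SimpleGraph V) (K1 K2 K3 L R : Set V) : Prop where
  cover : K1 ∪ K2 ∪ K3 ∪ L ∪ R = Set.univ
  pdisj : ∀ i j : Fin 5, i ≠ j → Disjoint (![K1, K2, K3, L, R] i) (![K1, K2, K3, L, R] j)
  Lne : L.Nonempty
  Rne : R.Nonempty
  LR_anti : AnticompleteTo G L R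
  clique12 : G.IsClique (K1 ∪ K2)
  clique23 : G.IsClique (K2 ∪ K3)
  cond3 : Cond3 G K1 K3 L
  cond4 : AnticompleteTo G K1 K3 ∨
      ∀ v ∈ L, ¬ ((∃ k ∈ K1, G.Adj v k) ∧ (∃ k ∈ K3, G.Adj v k))
  cond5 : ∃ x ∈ L, ∃ y ∈ R, ∃ t : Set V, IsTriad G t ∧ x ∈ t ∧ y ∈ t

def HasGoodPartition (G : SimpleGraph V) : Prop :=
  ∃ K1 K2 K3 L R : Set V, IsGoodPartition G K1 K2 K3 L R

/-- An induced prism in `G`, with triangle vertices `a i`, `b i` joined by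
the chordless paths `P i`. -/
structure IsPrism (G : SimpleGraph V) (a b : Fin 3 → V) (P : Fin 3 → List V) : Prop where
  chordless : ∀ i, IsChordlessPath G (P i)
  two_le : ∀ i, 2 ≤ (P i).length
  head : ∀ i, (P i).head? = some (a i)
  last : ∀ i, (P i).getLast? = some (b i)
  disj : ∀ i j, i ≠ j → ∀ u ∈ P i, u ∉ P j
  edge_iff : ∀ i j, i ≠ j → ∀ u ∈ P i, ∀ v ∈ P j,
    (G.Adj u v ↔ (u = a i ∧ v = a j) ∨ (u = b i ∧ v = b j))

def ContainsPrism (G : SimpleGraph V) : Prop :=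
  ∃ a b P, IsPrism G a b P

def ContainsEvenPrism (G : SimpleGraph V) : Prop :=
  ∃ a b P, IsPrism G a b P ∧ ∀ i : Fin 3, Even ((P i).length - 1)

def ContainsOddPrism (G : SimpleGraph V) : Prop :=
  ∃ a b P, IsPrism G a b P ∧ ∀ i : Fin 3, Odd ((P i).length - 1)

/-- A rung: a chordless path from `A` to `B` with interior in `C`. -/
def IsRung (G : SimpleGraph V) (A B C : Set V) (p : List V) : Prop :=
  IsChordlessPath G p ∧
    (∃ x, p.head? = some x ∧ x ∈ A) ∧
    (∃ y, p.getLast? = some y ∧ y ∈ B) ∧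
    ∀ v ∈ interior p, v ∈ C

/-- A hyperprism induced in `G`, with nine (pairwise disjoint) pieces `A i`, `C i`, `B i`. -/
structure IsHyperprism (G : SimpleGraph V) (A C B : Fin 3 → Set V) : Prop where
  A_ne : ∀ i, (A i).Nonempty
  B_ne : ∀ i, (B i).Nonempty
  pdisj : ∀ p q : Fin 3 × Fin 3, p ≠ q →
    Disjoint (![A, C, B] p.1 p.2) (![A, C, B] q.1 q.2)
  cross : ∀ i j, i ≠ j → ∀ u ∈ A i ∪ C i ∪ B i, ∀ v ∈ A j ∪ C j ∪ B j,
    (G.Adj u v ↔ (u ∈ A i ∧ v ∈ A j) ∨ (u ∈ B i ∧ v ∈ B j))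
  rung_cover : ∀ i, ∀ v ∈ A i ∪ C i ∪ B i,
    ∃ p, IsRung G (A i) (B i) (C i) p ∧ v ∈ p

/-- The vertex set of a hyperprism. -/
def hypVerts (A C B : Fin 3 → Set V) : Set V := ⋃ i, (A i ∪ C i ∪ B i)

def EvenHyperprism (G : SimpleGraph V) (A C B : Fin 3 → Set V) : Prop :=
  ∀ i p, IsRung G (A i) (B i) (C i) p → Even (p.length - 1)

def OddHyperprism (G : SimpleGraph V) (A C B : Fin 3 → Set V) : Prop :=
  ∀ i p, IsRung G (A i) (B i) (C i) p → Odd (p.length - 1)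

/-- A major neighbor of a hyperprism. -/
def IsMajorNbrHyp (G : SimpleGraph V) (A C B : Fin 3 → Set V) (x : V) : Prop :=
  x ∉ hypVerts A C B ∧
  ∃ (p : Fin 3 → List V) (a b : Fin 3 → V),
    (∀ i, IsRung G (A i) (B i) (C i) (p i) ∧
      (p i).head? = some (a i) ∧ (p i).getLast? = some (b i)) ∧
    (∃ i j, i ≠ j ∧ G.Adj x (a i) ∧ G.Adj x (a j)) ∧
    (∃ i j, i ≠ j ∧ G.Adj x (b i) ∧ G.Adj x (b j))

/-- A local subset of a hyperprism. -/
def HypLocal (A C B : Fin 3 → Set V) (X : Set V) : Prop :=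
  (X ⊆ ⋃ i, A i) ∨ (X ⊆ ⋃ i, B i) ∨ ∃ i, X ⊆ A i ∪ C i ∪ B i

/-- `x` and `y` are consecutive (in this order) in the list `l`. -/
def consecutive {β : Type*} (l : List β) (x y : β) : Prop :=
  ∃ i : ℕ, l[i]? = some x ∧ l[i + 1]? = some y

/-- `H` is a subdivision of `J`, witnessed by the injection `g` of branch vertices and,
for each edge `uv` of `J`, the path `P u v` of `H` replacing that edge. -/
structure IsSubdivisionVia {α' β : Type*} (J : SimpleGraph α') (H : SimpleGraph β)
    (g : α' ↪ β) (P : α' → α' → List β) : Prop where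
  chain : ∀ u v, J.Adj u v → (P u v).Chain' H.Adj
  nodup : ∀ u v, J.Adj u v → (P u v).Nodup
  rev : ∀ u v, J.Adj u v → P v u = (P u v).reverse
  head : ∀ u v, J.Adj u v → (P u v).head? = some (g u)
  last : ∀ u v, J.Adj u v → (P u v).getLast? = some (g v)
  branch : ∀ u v, J.Adj u v → ∀ w : α', g w ∈ P u v → w = u ∨ w = v
  int_disj : ∀ u v w x, J.Adj u v → J.Adj w x → s(u, v) ≠ s(w, x) →
    ∀ z ∈ interior (P u v), z ∉ P w x
  cover : ∀ z : β, (∃ w, g w = z) ∨ ∃ u v, J.Adj u v ∧ z ∈ interior (P u v)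
  edge_iff : ∀ a b : β, H.Adj a b ↔ ∃ u v, J.Adj u v ∧
    (consecutive (P u v) a b ∨ consecutive (P u v) b a)

def IsSubdivision {α' β : Type*} (J : SimpleGraph α') (H : SimpleGraph β) : Prop :=
  ∃ (g : α' ↪ β) (P : α' → α' → List β), IsSubdivisionVia J H g P

/-- The complete graph `K₄`. -/
def K4g : SimpleGraph (Fin 4) := completeGraph (Fin 4)

/-- `G` contains (as an induced subgraph) the line graph of a bipartite subdivision of `J`. -/
def ContainsLineGraphOfBipSubdiv {α' : Type*} (J : SimpleGraph α') (G : SimpleGraph V) : Prop :=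
  ∃ (β : Type) (H : SimpleGraph β), IsSubdivision J H ∧ H.Colorable 2 ∧
    Nonempty (H.lineGraph ↪g G)

/-- The set `W` induces in `G` the line graph of a bipartite subdivision of `J`. -/
def InducesLineGraphOfBipSubdiv {α' : Type*} (J : SimpleGraph α') (G : SimpleGraph V)
    (W : Set V) : Prop :=
  ∃ (β : Type) (H : SimpleGraph β), IsSubdivision J H ∧ H.Colorable 2 ∧
    Nonempty (H.lineGraph ≃g G.induce W)

/-- A (finite) graph is 3-connected. -/
def ThreeConnected {α' : Type*} [Fintype α'] (J : SimpleGraph α') : Prop :=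
  4 ≤ Fintype.card α' ∧ ∀ s : Set α', Nat.card s ≤ 2 → (J.induce sᶜ).Connected

/-- `J'` is an enlargement of `J`. -/
def IsEnlargement {α' α'' : Type*} [Fintype α''] (J : SimpleGraph α')
    (J' : SimpleGraph α'') : Prop :=
  ThreeConnected J' ∧ ∃ s : Set α'', s ≠ Set.univ ∧
    ∃ (β : Type) (H : SimpleGraph β), IsSubdivision J H ∧ Nonempty (H ≃g J'.induce s)

/-- The appearance of `J` given by the subdivision data `(H, g)` is degenerate. -/
def IsDegenerateVia {α' β : Type*} (J : SimpleGraph α') (H : SimpleGraph β)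
    (g : α' ↪ β) : Prop :=
  (Nonempty (J ≃g completeGraph (Fin 4)) ∧
    ∃ a b c d : α', [a, b, c, d].Nodup ∧
      H.Adj (g a) (g b) ∧ H.Adj (g b) (g c) ∧ H.Adj (g c) (g d) ∧ H.Adj (g d) (g a)) ∨
  (Nonempty (J ≃g completeBipartiteGraph (Fin 3) (Fin 3)) ∧ Nonempty (H ≃g J))

/-- `J` has a non-degenerate appearance in `G`. -/
def HasNondegenerateAppearance {α' : Type*} (J : SimpleGraph α') (G : SimpleGraph V) : Prop :=
  ∃ (β : Type) (H : SimpleGraph β) (g : α' ↪ β) (P : α' → α' → List β),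
    IsSubdivisionVia J H g P ∧ H.Colorable 2 ∧ ¬ IsDegenerateVia J H g ∧
    Nonempty (H.lineGraph ↪g G)

/-- A `uv`-rung of a strip system. -/
def IsStripRung (G : SimpleGraph V) (S : α → α → Set V) (N : α → Set V)
    (u v : α) (p : List V) : Prop :=
  IsChordlessPath G p ∧ (∀ z ∈ p, z ∈ S u v) ∧
    (∃ a, p.head? = some a ∧ a ∈ N u ∧ ∀ z ∈ p, z ∈ N u → z = a) ∧
    (∃ b, p.getLast? = some b ∧ b ∈ N v ∧ ∀ z ∈ p, z ∈ N v → z = b)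

/-- The vertex set `V(S,N)` of a strip system. -/
def stripVerts (J : SimpleGraph α) (S : α → α → Set V) : Set V :=
  {z | ∃ u v, J.Adj u v ∧ z ∈ S u v}

/-- A `J`-strip system `(S,N)` in `G`. -/
structure IsStripSystem {α' : Type*} (J : SimpleGraph α') (G : SimpleGraph V)
    (S : α' → α' → Set V) (N : α' → Set V) : Prop where
  S_symm : ∀ u v, S u v = S v u
  S_empty : ∀ u v, ¬ J.Adj u v → S u v = ∅
  S_disj : ∀ u v w x, J.Adj u v → J.Adj w x → s(u, v) ≠ s(w, x) →
    Disjoint (S u v) (S w x)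
  N_sub : ∀ u, N u ⊆ {z | ∃ v, J.Adj u v ∧ z ∈ S u v}
  rung_cover : ∀ u v, J.Adj u v → ∀ z ∈ S u v,
    ∃ p, IsStripRung G S N u v p ∧ z ∈ p
  far_anti : ∀ u v w x, J.Adj u v → J.Adj w x → u ≠ w → u ≠ x → v ≠ w → v ≠ x →
    AnticompleteTo G (S u v) (S w x)
  fork : ∀ u v w, J.Adj u v → J.Adj u w → v ≠ w →
    ∀ a ∈ S u v, ∀ b ∈ S u w, (G.Adj a b ↔ a ∈ N u ∧ b ∈ N u)
  parity : ∃ R : Sym2 α' → List V,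
    (∀ u v, J.Adj u v →
      IsStripRung G S N u v (R s(u, v)) ∨ IsStripRung G S N v u (R s(u, v))) ∧
    ∀ (u : α') (c : J.Walk u u), c.IsCycle →
      ((c.edges.map fun e => (R e).length - 1).sum % 2 = c.length % 2)

/-- `X` saturates, where `Nuv u v` plays the role of `N_uv`. -/
def SaturatesOn (J : SimpleGraph α) (Nuv : α → α → Set V) (X : Set V) : Prop :=
  ∀ u v w, J.Adj u v → J.Adj u w → ¬ (Nuv u v ⊆ X) → ¬ (Nuv u w ⊆ X) → v = w

/-- `x` is major with respect to the strip system `(S,N)`. -/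
def IsMajorStrip (J : SimpleGraph α) (G : SimpleGraph V)
    (S : α → α → Set V) (N : α → Set V) (x : V) : Prop :=
  x ∉ stripVerts J S ∧ SaturatesOn J (fun u v => S u v ∩ N u) (G.neighborSet x)

/-- `R` is a choice of rungs of the strip system `(S,N)`. -/
def IsChoiceOfRungs (J : SimpleGraph α) (G : SimpleGraph V)
    (S : α → α → Set V) (N : α → Set V) (R : Sym2 α → List V) : Prop :=
  ∀ u v, J.Adj u v →
    IsStripRung G S N u v (R s(u, v)) ∨ IsStripRung G S N v u (R s(u, v))

/-- `x` is major with respect to the choice of rungs `R`. -/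
def IsMajorOnChoice (J : SimpleGraph α) (G : SimpleGraph V)
    (S : α → α → Set V) (N : α → Set V) (R : Sym2 α → List V) (x : V) : Prop :=
  x ∉ stripVerts J S ∧
  SaturatesOn J (fun u v => {z | z ∈ R s(u, v)} ∩ N u) (G.neighborSet x)

/-- A local subset of a strip system. -/
def StripLocal (J : SimpleGraph α) (S : α → α → Set V) (N : α → Set V)
    (X : Set V) : Prop :=
  (∃ u, X ⊆ N u) ∨ ∃ u v, J.Adj u v ∧ X ⊆ S u v

/-- Some choice of rungs of the `K₄`-strip system yields a degenerate appearance of `K₄`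
(the four branch vertices form a square, i.e. some 4-cycle of rungs are all single vertices). -/
def ChoiceYieldsDegenerateK4 (J : SimpleGraph α) (G : SimpleGraph V)
    (S : α → α → Set V) (N : α → Set V) : Prop :=
  ∃ R, IsChoiceOfRungs J G S N R ∧ ∃ a b c d : α, [a, b, c, d].Nodup ∧
    J.Adj a b ∧ J.Adj b c ∧ J.Adj c d ∧ J.Adj d a ∧
    (R s(a, b)).length = 1 ∧ (R s(b, c)).length = 1 ∧
    (R s(c, d)).length = 1 ∧ (R s(d, a)).length = 1

/-- The set `O_ij` for a `K₄`-strip system. -/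
def OsetK4 (G : SimpleGraph V) (S : Fin 4 → Fin 4 → Set V) (N : Fin 4 → Set V)
    (i j : Fin 4) : Set V :=
  {x | x ∉ stripVerts K4g S ∧
    (∀ y ∈ (N i ∪ N j) \ S i j, G.Adj x y) ∧
    (∀ y ∈ stripVerts K4g S \ (N i ∪ N j ∪ S i j), ¬ G.Adj x y)}

/-- A special `K₄`-strip system (vertices of `K₄` are `0,1,2,3`, standing for `1,2,3,4`). -/
structure IsSpecialK4StripSystem (G : SimpleGraph V)
    (S : Fin 4 → Fin 4 → Set V) (N : Fin 4 → Set V) : Prop where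
  strip : IsStripSystem K4g G S N
  a13 : S 0 2 ⊆ N 0 ∧ S 0 2 ⊆ N 2
  a24 : S 1 3 ⊆ N 1 ∧ S 1 3 ⊆ N 3
  b12 : ∀ p, IsStripRung G S N 0 1 p → Even (p.length - 1) ∧ 3 ≤ p.length
  b34 : ∀ p, IsStripRung G S N 2 3 p → Even (p.length - 1) ∧ 3 ≤ p.length
  b14 : ∀ p, IsStripRung G S N 0 3 p → Odd (p.length - 1) ∧ 4 ≤ p.length
  b23 : ∀ p, IsStripRung G S N 1 2 p → Odd (p.length - 1) ∧ 4 ≤ p.length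
  c_ne12 : (OsetK4 G S N 0 1).Nonempty
  c_ne34 : (OsetK4 G S N 2 3).Nonempty
  c_comp : CompleteTo G (OsetK4 G S N 0 1) (OsetK4 G S N 2 3)
  majors : ∀ x ∉ stripVerts K4g S ∪ OsetK4 G S N 0 1 ∪ OsetK4 G S N 2 3,
      (∃ R, IsChoiceOfRungs K4g G S N R ∧ IsMajorOnChoice K4g G S N R x) →
      IsMajorStrip K4g G S N x
  e_app : ¬ ∃ (α'' : Type) (_ : Fintype α'') (J' : SimpleGraph α'') (W : Set V),
      IsEnlargement K4g J' ∧ stripVerts K4g S ⊆ W ∧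
      Disjoint W (OsetK4 G S N 0 1 ∪ OsetK4 G S N 2 3) ∧
      InducesLineGraphOfBipSubdiv J' G W
  e_max : ¬ ∃ (S' : Fin 4 → Fin 4 → Set V) (N' : Fin 4 → Set V),
      IsStripSystem K4g G S' N' ∧
      Disjoint (stripVerts K4g S') (OsetK4 G S N 0 1 ∪ OsetK4 G S N 2 3) ∧
      stripVerts K4g S ⊂ stripVerts K4g S'

/-- An almost good partition: conditions (i), (ii) and (v) of a good partition. -/
structure IsAlmostGoodPartition (G : SimpleGraph V) (K1 K2 K3 L R : Set V) : Prop where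
  cover : K1 ∪ K2 ∪ K3 ∪ L ∪ R = Set.univ
  pdisj : ∀ i j : Fin 5, i ≠ j → Disjoint (![K1, K2, K3, L, R] i) (![K1, K2, K3, L, R] j)
  Lne : L.Nonempty
  Rne : R.Nonempty
  LR_anti : AnticompleteTo G L R
  clique12 : G.IsClique (K1 ∪ K2)
  clique23 : G.IsClique (K2 ∪ K3)
  cond5 : ∃ x ∈ L, ∃ y ∈ R, ∃ t : Set V, IsTriad G t ∧ x ∈ t ∧ y ∈ t

/-- An optimal good partition. -/
def IsOptimalGoodPartition (G : SimpleGraph V) (K1 K2 K3 L R : Set V) : Prop :=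
  IsGoodPartition G K1 K2 K3 L R ∧
    ¬ ∃ K1' K2' K3' L' R' : Set V, IsGoodPartition G K1' K2' K3' L' R' ∧
      (K2 ⊂ K2' ∨ (K2 = K2' ∧ K3 ⊂ K3'))

/-- `c` is a maximal vertex of `K`: its neighborhood in `other` contains that of
every other vertex of `K`. -/
def IsMaxVert (G : SimpleGraph V) (other K : Set V) (c : V) : Prop :=
  c ∈ K ∧ ∀ d ∈ K, ∀ z ∈ other, G.Adj d z → G.Adj c z

/-- A frame in `G`. -/
structure IsFrame (G : SimpleGraph V) (Q1 Q3 : Set V) (x y : V) (C1 C3 : Set V) : Prop where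
  xy_ne : x ≠ y
  xy_triad : ∃ t : Set V, IsTriad G t ∧ x ∈ t ∧ y ∈ t
  Q1_cl : G.IsClique Q1
  Q1_x : x ∉ Q1
  Q1_y : y ∉ Q1
  Q1_max : ∀ Q : Set V, G.IsClique Q → x ∉ Q → y ∉ Q → Q1 ⊆ Q → Q = Q1
  Q3_cl : G.IsClique Q3
  Q3_x : x ∉ Q3
  Q3_y : y ∉ Q3
  Q3_max : ∀ Q : Set V, G.IsClique Q → x ∉ Q → y ∉ Q → Q3 ⊆ Q → Q = Q3
  C1_sub : C1 ⊆ Q1 \ Q3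
  C3_sub : C3 ⊆ Q3 \ Q1
  C1_small : C1.Subsingleton
  C3_small : C3.Subsingleton

/-- A frame for a good partition. -/
structure IsFrameFor (G : SimpleGraph V) (Q1 Q3 : Set V) (x y : V) (C1 C3 : Set V)
    (K1 K2 K3 L R : Set V) : Prop where
  frame : IsFrame G Q1 Q3 x y C1 C3
  K1_sub : K1 ⊆ Q1 \ Q3
  K2_eq : K2 = Q1 ∩ Q3
  K3_sub : K3 ⊆ Q3 \ Q1
  xL : x ∈ L
  yR : y ∈ R
  C1_spec : (K1 = ∅ → C1 = ∅) ∧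
    (K1 ≠ ∅ → ∃ c1, C1 = {c1} ∧ IsMaxVert G (Q3 \ Q1) K1 c1)
  C3_spec : (K3 = ∅ → C3 = ∅) ∧
    (K3 ≠ ∅ → ∃ c3, C3 = {c3} ∧ IsMaxVert G (Q1 \ Q3) K3 c3)


/-!
(1) Suppose `a, b ∈ K1` with `a` adjacent to `v'` and `b` not. Walking from `a` to `v'` and back
along `P` one reaches `K3` (at the first neighbour of `c3`, or at `u`, or through `u` to `c3`) by a
chordless path of `G` with the `K1`–`K3` edges removed and interior in `L`. Condition (iii) for
`K` gives an interior vertex complete to `K1`. It is not `v'` (which misses `b`), nor an interior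
vertex before `v'` (minimality of `P` keeps those away from `K1' ⊇ K1`), nor `u`: otherwise `u`
sees `c1`, so `c1c3` is an edge by maximality of `c3`, and `u ∈ L` sees both `c1` and `c3`,
against condition (iv).

(2) An edge between `K1'` and `K3'` forces the edge `c1c3` by maximality of `c1` and `c3`, so by
(iv) a vertex of `L` seeing `b ∈ K3` has no neighbour in `K1`; yet condition (iii) for `K'`, applied
to the path `a - u - b`, makes `u` complete to `K1'`.
-/

section ChordlessPath

variable {G H : SimpleGraph V} {p l : List V} {a b u v z : V}

lemma isChordlessPath_iff_getElem :
    IsChordlessPath G p ↔ p.IsChain G.Adj ∧ p.Nodup ∧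
      ∀ i j (_ : i + 2 ≤ j) (hj : j < p.length), ¬ G.Adj (p[i]'(by omega)) p[j] :=
  ⟨fun ⟨hc, hn, h⟩ => ⟨hc, hn, fun i j hij hj => h ⟨i, by omega⟩ ⟨j, hj⟩ hij⟩,
    fun ⟨hc, hn, h⟩ => ⟨hc, hn, fun i j hij => h i j hij j.2⟩⟩

lemma isChordlessPath_congr (h : ∀ x ∈ p, ∀ y ∈ p, G.Adj x y ↔ H.Adj x y) :
    IsChordlessPath G p ↔ IsChordlessPath H p := by
  have h' : ∀ i j (hi : i < p.length) (hj : j < p.length), G.Adj p[i] p[j] ↔ H.Adj p[i] p[j] :=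
    fun i j _ _ => h _ (p.getElem_mem _) _ (p.getElem_mem _)
  simp only [isChordlessPath_iff_getElem, List.isChain_iff_getElem, h']

@[simp]
lemma isChordlessPath_nil : IsChordlessPath G [] :=
  ⟨List.isChain_nil, List.nodup_nil, fun i => i.elim0⟩

@[simp]
lemma isChordlessPath_singleton : IsChordlessPath G [a] :=
  isChordlessPath_iff_getElem.2 ⟨List.isChain_singleton a, List.nodup_singleton a,
    fun _ j hij hj => by simp only [List.length_singleton] at hj; omega⟩

lemma isChordlessPath_cons_cons :
    IsChordlessPath G (a :: b :: l) ↔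
      G.Adj a b ∧ a ∉ b :: l ∧ (∀ w ∈ l, ¬ G.Adj a w) ∧ IsChordlessPath G (b :: l) := by
  simp only [isChordlessPath_iff_getElem, List.isChain_cons_cons, List.nodup_cons (a := a)]
  constructor
  · rintro ⟨⟨hab, hc⟩, ⟨ha, hn⟩, h⟩
    refine ⟨hab, ha, fun w hw => ?_, hc, hn, fun i j hij hj =>
      h (i + 1) (j + 1) (by omega) (by simp only [List.length_cons] at hj ⊢; omega)⟩
    obtain ⟨k, hk, rfl⟩ := List.getElem_of_mem hw
    exact h 0 (k + 2) (by omega) (by simpa)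
  · rintro ⟨hab, ha, hl, hc, hn, h⟩
    refine ⟨⟨hab, hc⟩, ⟨ha, hn⟩, fun i j hij hj => ?_⟩
    obtain ⟨j, rfl⟩ : ∃ k, j = k + 1 := ⟨j - 1, by omega⟩
    rcases i with _ | i
    · obtain ⟨k, rfl⟩ : ∃ k, j = k + 1 := ⟨j - 1, by omega⟩
      exact hl _ (List.getElem_mem _)
    · exact h i j (by omega) (by simpa using hj)

lemma IsChordlessPath.reverse (h : IsChordlessPath G p) : IsChordlessPath G p.reverse := by
  obtain ⟨hc, hn, hch⟩ := isChordlessPath_iff_getElem.1 h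
  refine isChordlessPath_iff_getElem.2 ⟨List.isChain_reverse.2 (hc.imp fun _ _ h => h.symm),
    List.nodup_reverse.2 hn, fun i j hij hj hadj => ?_⟩
  simp only [List.getElem_reverse] at hadj
  simp only [List.length_reverse] at hj
  exact hch _ _ (by omega) (by omega) hadj.symm

lemma IsChordlessPath.tail (h : IsChordlessPath G (a :: l)) : IsChordlessPath G l := by
  cases l with
  | nil => exact isChordlessPath_nil
  | cons b l => exact (isChordlessPath_cons_cons.1 h).2.2.2

lemma IsChordlessPath.suffix {q : List V} (h : IsChordlessPath G p) (hq : q <:+ p) :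
    IsChordlessPath G q := by
  induction p with
  | nil => rwa [List.suffix_nil.1 hq]
  | cons a p ih =>
    rcases List.suffix_cons_iff.1 hq with rfl | hq
    · exact h
    · exact ih h.tail hq

lemma IsChordlessPath.prefix {q : List V} (h : IsChordlessPath G p) (hq : q <+: p) :
    IsChordlessPath G q := by
  simpa using (h.reverse.suffix (List.reverse_suffix.2 hq)).reverse

lemma IsChordlessPath.concat (h : IsChordlessPath G (l ++ [b])) (hz : z ∉ l ++ [b])
    (hbz : G.Adj b z) (hlz : ∀ y ∈ l, ¬ G.Adj y z) : IsChordlessPath G (l ++ [b, z]) := by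
  have hrev : IsChordlessPath G (z :: b :: l.reverse) :=
    isChordlessPath_cons_cons.2 ⟨hbz.symm, by simpa [or_comm] using hz,
      fun y hy hzy => hlz y (List.mem_reverse.1 hy) hzy.symm, by simpa using h.reverse⟩
  simpa using hrev.reverse

lemma isChordlessPath_deleteEdges_iff (huv : u ∉ p ∨ v ∉ p) :
    IsChordlessPath (G.deleteEdges {s(u, v)}) p ↔ IsChordlessPath G p := by
  refine isChordlessPath_congr fun x hx y hy => ?_
  simp only [SimpleGraph.deleteEdges_adj, Set.mem_singleton_iff, Sym2.eq_iff, and_iff_left_iff_imp]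
  rintro - (⟨rfl, rfl⟩ | ⟨rfl, rfl⟩) <;> tauto

lemma IsChordlessPath.exists_adj_of_cons (h : IsChordlessPath G (a :: l)) (hl : l ≠ []) :
    ∃ x ∈ l, G.Adj a x := by
  obtain ⟨b, l, rfl⟩ := List.exists_cons_of_ne_nil hl
  exact ⟨b, List.mem_cons_self, (isChordlessPath_cons_cons.1 h).1⟩

lemma IsChordlessPath.exists_prefix_append (h : IsChordlessPath G (a :: l)) (hz : z ∉ a :: l)
    (hadj : ∃ w ∈ a :: l, G.Adj w z) : ∃ m, m <+: l ∧ IsChordlessPath G (a :: m ++ [z]) := by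
  induction l using List.reverseRecOn with
  | nil =>
    refine ⟨[], List.nil_prefix, ?_⟩
    obtain ⟨w, hw, hwz⟩ := hadj
    rw [List.mem_singleton.1 hw] at hwz
    exact isChordlessPath_cons_cons.2 ⟨hwz, by simpa [eq_comm] using hz, by simp, by simp⟩
  | append_singleton l b ih =>
    by_cases hl : ∃ w ∈ a :: l, G.Adj w z
    · have hpre : a :: l <+: a :: (l ++ [b]) := (List.prefix_cons_inj a).2 (List.prefix_append _ _)
      obtain ⟨m, hm, hmz⟩ := ih (h.prefix hpre) (fun hz' => hz (hpre.subset hz')) hl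
      exact ⟨m, hm.trans (List.prefix_append _ _), hmz⟩
    · push Not at hl
      obtain ⟨w, hw, hwz⟩ := hadj
      have hwb : w = b := by
        by_contra hne
        exact hl w (by simpa [hne] using hw) hwz
      subst hwb
      refine ⟨l ++ [w], List.prefix_refl _, ?_⟩
      simpa using IsChordlessPath.concat (l := a :: l) h (by simpa using hz) hwz hl

end ChordlessPath

section Partitions

variable {G : SimpleGraph V} {K1 K2 K3 L R : Set V}

lemma IsGoodPartition.toIsAlmostGoodPartition (h : IsGoodPartition G K1 K2 K3 L R) :
    IsAlmostGoodPartition G K1 K2 K3 L R :=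
  ⟨h.cover, h.pdisj, h.Lne, h.Rne, h.LR_anti, h.clique12, h.clique23, h.cond5⟩

namespace IsAlmostGoodPartition

lemma disjoint_K1_L (h : IsAlmostGoodPartition G K1 K2 K3 L R) : Disjoint K1 L := by
  simpa using h.pdisj 0 3 (by decide)

lemma disjoint_K3_L (h : IsAlmostGoodPartition G K1 K2 K3 L R) : Disjoint K3 L := by
  simpa using h.pdisj 2 3 (by decide)

lemma disjoint_K1_K3 (h : IsAlmostGoodPartition G K1 K2 K3 L R) : Disjoint K1 K3 := by
  simpa using h.pdisj 0 2 (by decide)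

lemma mem_K3_or_mem_L (h : IsAlmostGoodPartition G K1 K2 K3 L R) {w x : V} (h1 : w ∉ K1)
    (h2 : w ∉ K2) (hx : x ∈ L) (hwx : G.Adj w x) : w ∈ K3 ∨ w ∈ L := by
  have hw : w ∈ K1 ∪ K2 ∪ K3 ∪ L ∪ R := h.cover ▸ Set.mem_univ w
  have hR : w ∉ R := fun hR => h.LR_anti hx hR hwx.symm
  simp only [Set.mem_union] at hw
  tauto

end IsAlmostGoodPartition

lemma IsGoodPartition.anticompleteTo_of_adj_of_adj (h : IsGoodPartition G K1 K2 K3 L R)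
    {w a b : V} (hw : w ∈ L) (ha : a ∈ K1) (hb : b ∈ K3) (hwa : G.Adj w a) (hwb : G.Adj w b) :
    AnticompleteTo G K1 K3 :=
  h.cond4.resolve_right fun h4 => h4 w hw ⟨⟨a, ha, hwa⟩, b, hb, hwb⟩

lemma removeBetween_adj {A B : Set V} {x y : V} :
    (removeBetween G A B).Adj x y ↔ G.Adj x y ∧ ¬ (x ∈ A ∧ y ∈ B) ∧ ¬ (y ∈ A ∧ x ∈ B) := by
  simp only [removeBetween, SimpleGraph.deleteEdges_adj]
  constructor
  · rintro ⟨hxy, hn⟩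
    exact ⟨hxy, fun ⟨hx, hy⟩ => hn ⟨x, hx, y, hy, rfl⟩,
      fun ⟨hy, hx⟩ => hn ⟨y, hy, x, hx, Sym2.eq_swap⟩⟩
  · rintro ⟨hxy, h1, h2⟩
    refine ⟨hxy, fun ⟨x', hx', y', hy', he⟩ => ?_⟩
    rcases Sym2.eq_iff.1 he with ⟨rfl, rfl⟩ | ⟨rfl, rfl⟩
    exacts [h1 ⟨hx', hy'⟩, h2 ⟨hx', hy'⟩]

lemma Cond3.exists_completeTo_of_path {K1 K3 L : Set V} (h3 : Cond3 G K1 K3 L)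
    (h1L : Disjoint K1 L) (h3L : Disjoint K3 L) (h13 : Disjoint K1 K3) {a b c : V} {M : List V}
    (ha : a ∈ K1) (hc : c ∈ K3) (hL : ∀ w ∈ b :: M, w ∈ L)
    (hW : IsChordlessPath G (b :: M ++ [c])) (hab : G.Adj a b) (haM : ∀ w ∈ M, ¬ G.Adj a w) :
    ∃ t ∈ b :: M, VertexCompleteTo G t K1 := by
  have hnK1 : ∀ w ∈ b :: M ++ [c], w ∉ K1 := by
    intro w hw hwK1
    rcases List.mem_append.1 hw with hw | hw
    · exact h1L.notMem_of_mem_left hwK1 (hL w hw)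
    · exact h13.notMem_of_mem_left (List.mem_singleton.1 hw ▸ hwK1) hc
  have hW' : IsChordlessPath (removeBetween G K1 K3) (b :: M ++ [c]) :=
    (isChordlessPath_congr fun x hx y hy => by simp [removeBetween_adj, hnK1 x hx, hnK1 y hy]).1 hW
  have hbL := hL b List.mem_cons_self
  have hpath : IsChordlessPath (removeBetween G K1 K3) (a :: b :: M ++ [c]) := by
    refine isChordlessPath_cons_cons.2 ⟨?_, fun haW => hnK1 a (by simpa using haW) ha, ?_, hW'⟩
    · exact removeBetween_adj.2 ⟨hab, fun h => h3L.notMem_of_mem_left h.2 hbL,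
        fun h => h1L.notMem_of_mem_left h.1 hbL⟩
    · intro w hw hadj
      rcases List.mem_append.1 hw with hw | hw
      · exact haM w hw (removeBetween_adj.1 hadj).1
      · exact (removeBetween_adj.1 hadj).2.1 ⟨ha, List.mem_singleton.1 hw ▸ hc⟩
  have hint : interior (a :: b :: M ++ [c]) = b :: M := List.dropLast_concat
  obtain ⟨t, ht, htL, htc⟩ :=
    h3 _ a c hpath rfl List.getLast?_concat ha hc (fun w hw => hL w (hint ▸ hw))
  refine ⟨t, ?_, htc⟩
  rcases List.mem_append.1 ht with ht | ht
  · rcases List.mem_cons.1 ht with rfl | ht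
    · exact absurd htL (h1L.notMem_of_mem_left ha)
    · exact ht
  · exact absurd (List.mem_singleton.1 ht ▸ htL) (h3L.notMem_of_mem_left hc)

end Partitions

structure IsCond3Violation (G : SimpleGraph V) (K1 K3 L : Set V) (u v : V) (p : List V) :
    Prop where
  left_mem : u ∈ K3
  right_mem : v ∈ K1
  chordless : IsChordlessPath (G.deleteEdges {s(u, v)}) p
  head : p.head? = some u
  getLast : p.getLast? = some v
  three_le_length : 3 ≤ p.length
  interior_subset : ∀ w ∈ interior p, w ∈ L
  not_completeTo : ∀ w ∈ p, ¬ VertexCompleteTo G w K1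

lemma exists_eq_cons_append_pair {p : List α} {u v v' : α} (hu : p.head? = some u)
    (hv : p.getLast? = some v) (hv' : p.dropLast.getLast? = some v') (hlen : 3 ≤ p.length) :
    ∃ I, p = u :: (I ++ [v', v]) := by
  obtain ⟨q, rfl⟩ := List.getLast?_eq_some_iff.1 hv
  obtain ⟨r, rfl⟩ := List.getLast?_eq_some_iff.1 (List.dropLast_concat ▸ hv')
  obtain ⟨b, r, rfl⟩ := List.exists_cons_of_ne_nil (l := r) (by rintro rfl; simp at hlen)
  obtain rfl : b = u := by simpa using hu
  exact ⟨r, by simp⟩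

namespace IsCond3Violation

variable {G : SimpleGraph V} {K1 K2 K3 L R : Set V} {u v v' : V} {I : List V}

lemma isChordlessPath_dropLast (hp : IsCond3Violation G K1 K3 L u v (u :: (I ++ [v', v]))) :
    IsChordlessPath G (u :: I ++ [v']) := by
  have hnd : ((u :: I ++ [v']) ++ [v]).Nodup := by simpa using hp.chordless.2.1
  have hv : v ∉ u :: I ++ [v'] := fun h => (List.nodup_append.1 hnd).2.2 _ h _ (by simp) rfl
  exact (isChordlessPath_deleteEdges_iff (Or.inr hv)).1
    (hp.chordless.prefix ⟨[v], by simp⟩)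

lemma mem_of_mem_interior (hp : IsCond3Violation G K1 K3 L u v (u :: (I ++ [v', v]))) :
    ∀ w ∈ I ++ [v'], w ∈ L :=
  fun w hw => hp.interior_subset w (by simpa [interior] using hw)

/-- By minimality, a vertex `z ∈ K1` seeing an interior vertex before `v'` would give a shorter
violation: follow the path from `u` to the first neighbour of `z` and step to `z`. -/
lemma not_adj_of_minimal (hagp : IsAlmostGoodPartition G K1 K2 K3 L R)
    (hp : IsCond3Violation G K1 K3 L u v (u :: (I ++ [v', v])))
    (hmin : ∀ u₂ v₂ q, IsCond3Violation G K1 K3 L u₂ v₂ q → (u :: (I ++ [v', v])).length ≤ q.length)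
    {z w : V} (hz : z ∈ K1) (hw : w ∈ I) : ¬ G.Adj z w := by
  intro hzw
  have hwL : w ∈ L := hp.mem_of_mem_interior w (by simp [hw])
  by_cases hzv : z = v
  · subst hzv
    have hu : u ∉ I ++ [v', z] := (List.nodup_cons.1 hp.chordless.2.1).1
    have hsuf := (isChordlessPath_deleteEdges_iff (Or.inl hu)).1 hp.chordless.tail
    exact (isChordlessPath_cons_cons.1 (by simpa using hsuf.reverse)).2.2.1 w
      (List.mem_reverse.2 hw) hzw
  have hzu : z ≠ u := fun h => hagp.disjoint_K1_K3.notMem_of_mem_left hz (h ▸ hp.left_mem)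
  have hzl : z ∉ u :: I := by
    intro h
    rcases List.mem_cons.1 h with h | hzI
    · exact hzu h
    · exact hagp.disjoint_K1_L.notMem_of_mem_left hz (hp.mem_of_mem_interior z (by simp [hzI]))
  have hl : IsChordlessPath (G.deleteEdges {s(u, z)}) (u :: I) :=
    (isChordlessPath_deleteEdges_iff (Or.inr hzl)).2
      (hp.isChordlessPath_dropLast.prefix ⟨[v'], by simp⟩)
  have hwu : w ≠ u := fun h => hagp.disjoint_K3_L.notMem_of_mem_left hp.left_mem (h ▸ hwL)
  obtain ⟨m, hm, hq⟩ := hl.exists_prefix_append hzl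
    ⟨w, List.mem_cons_of_mem _ hw, by simp [hzw.symm, hwu, hzu]⟩
  have hm0 : m ≠ [] := by
    rintro rfl
    simpa using (isChordlessPath_cons_cons.1 hq).1
  have hmp : ∀ y ∈ u :: m, y ∈ u :: (I ++ [v', v]) := by
    rintro y (_ | ⟨_, hy⟩)
    exacts [List.mem_cons_self, by simp [hm.subset hy]]
  have hshort := hmin u z (u :: m ++ [z])
    { left_mem := hp.left_mem
      right_mem := hz
      chordless := hq
      head := rfl
      getLast := List.getLast?_concat
      three_le_length := by simpa [Nat.one_le_iff_ne_zero] using hm0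
      interior_subset := fun y hy => hp.mem_of_mem_interior y (by
        simp only [interior, List.cons_append, List.tail_cons, List.dropLast_concat] at hy
        simp [hm.subset hy])
      not_completeTo := fun y hy => by
        rcases List.mem_append.1 hy with hy | hy
        · exact hp.not_completeTo y (hmp y hy)
        · exact fun h => G.irrefl (List.mem_singleton.1 hy ▸ h hz) }
  have := hm.length_le
  simp only [List.length_cons, List.length_append] at hshort
  omega

end IsCond3Violation

/-- Either `c` sees a vertex of `I ++ [v']`, and we walk back from `v'` to the first one; or we
walk back to `u`, stopping there if `u ∈ K3` and otherwise stepping on to `c`, directly from `u`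
if `a` sees `u`. -/
lemma exists_chordlessPath_to_K3 {G : SimpleGraph V} {K3 L : Set V} {a u c v' : V} {I : List V}
    (hpath : IsChordlessPath G (u :: I ++ [v'])) (hL : ∀ w ∈ I ++ [v'], w ∈ L)
    (hu : u ∈ K3 ∨ u ∈ L) (hc : c ∈ K3) (hcL : c ∉ L) (huc : u ∈ L → G.Adj u c)
    (hav' : G.Adj a v') (haI : ∀ w ∈ I, ¬ G.Adj a w) :
    ∃ b M d, d ∈ K3 ∧ (∀ w ∈ b :: M, w ∈ u :: I ++ [v'] ∧ w ∈ L) ∧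
      IsChordlessPath G (b :: M ++ [d]) ∧ G.Adj a b ∧ ∀ w ∈ M, ¬ G.Adj a w := by
  have hrev : IsChordlessPath G (v' :: I.reverse ++ [u]) := by simpa using hpath.reverse
  have hback : ∀ w ∈ v' :: I.reverse, w ∈ u :: I ++ [v'] ∧ w ∈ L := fun w hw => by
    have hw' : w ∈ I ++ [v'] := by
      simp only [List.mem_cons, List.mem_reverse, List.mem_append] at hw ⊢
      tauto
    exact ⟨List.mem_cons_of_mem _ hw', hL w hw'⟩
  by_cases hcI : ∃ w ∈ v' :: I.reverse, G.Adj w c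
  · obtain ⟨m, hm, hW⟩ := (hrev.prefix (List.prefix_append _ _)).exists_prefix_append
      (fun h => hcL (hback _ h).2) hcI
    refine ⟨v', m, c, hc, fun w hw => hback w ?_, hW, hav',
      fun w hw => haI w (List.mem_reverse.1 (hm.subset hw))⟩
    exact (List.cons_prefix_cons.2 ⟨rfl, hm⟩).subset hw
  push Not at hcI
  rcases hu with hu | hu
  · exact ⟨v', I.reverse, u, hu, hback, hrev, hav', fun w hw => haI w (List.mem_reverse.1 hw)⟩
  have huc' : u ≠ c := fun h => hcL (h ▸ hu)
  by_cases hau : G.Adj a u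
  · exact ⟨u, [], c, hc, by simpa using hu,
      isChordlessPath_cons_cons.2 ⟨huc hu, by simpa using huc', by simp, by simp⟩, hau, by simp⟩
  refine ⟨v', I.reverse ++ [u], c, hc, fun w hw => ?_, ?_, hav', fun w hw => ?_⟩
  · rcases List.mem_append.1 (show w ∈ (v' :: I.reverse) ++ [u] from hw) with hw | hw
    · exact hback w hw
    · rw [List.mem_singleton.1 hw]; exact ⟨List.mem_cons_self, hu⟩
  · have hcW : c ∉ v' :: I.reverse ++ [u] := by
      simp only [List.mem_append, List.mem_singleton, not_or]
      exact ⟨fun h => hcL (hback c h).2, huc'.symm⟩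
    simpa using hrev.concat hcW (huc hu) hcI
  · rcases List.mem_append.1 hw with hw | hw
    · exact haI w (List.mem_reverse.1 hw)
    · exact List.mem_singleton.1 hw ▸ hau

section FrameStep

variable {G : SimpleGraph V} {K1 K2 K3 L R K1' K2' K3' L' R' Q1 Q3 : Set V} {c1 c3 : V}

lemma IsFrameFor.mem_K1 {x y : V} {C3 : Set V}
    (hF : IsFrameFor G Q1 Q3 x y {c1} C3 K1 K2 K3 L R) (hK1 : K1.Nonempty) : c1 ∈ K1 := by
  obtain ⟨c, hc, hmax⟩ := hF.C1_spec.2 hK1.ne_empty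
  exact Set.singleton_eq_singleton_iff.1 hc ▸ hmax.1

lemma IsFrameFor.mem_K3 {x y : V} {C1 : Set V}
    (hF : IsFrameFor G Q1 Q3 x y C1 {c3} K1 K2 K3 L R) (hK3 : K3.Nonempty) : c3 ∈ K3 := by
  obtain ⟨c, hc, hmax⟩ := hF.C3_spec.2 hK3.ne_empty
  exact Set.singleton_eq_singleton_iff.1 hc ▸ hmax.1

lemma IsMaxVert.adj_of_adj (hc1 : IsMaxVert G (Q3 \ Q1) K1' c1)
    (hc3 : IsMaxVert G (Q1 \ Q3) K3' c3) (hK1' : K1' ⊆ Q1 \ Q3) (hK3' : K3' ⊆ Q3 \ Q1)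
    {e f : V} (he : e ∈ K1') (hf : f ∈ K3') (hef : G.Adj e f) : G.Adj c1 c3 :=
  (hc3.2 f hf c1 (hK1' hc1.1) (hc1.2 e he f (hK3' hf) hef).symm).symm

theorem IsCond3Violation.completeTo_or_anticompleteTo_of_minimal {u v v' : V} {I : List V}
    (hgp : IsGoodPartition G K1 K2 K3 L R) (hagp : IsAlmostGoodPartition G K1' K2' K3' L' R')
    (hp : IsCond3Violation G K1' K3' L' u v (u :: (I ++ [v', v])))
    (hmin : ∀ u₂ v₂ q, IsCond3Violation G K1' K3' L' u₂ v₂ q →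
      (u :: (I ++ [v', v])).length ≤ q.length)
    (hQ3 : G.IsClique Q3) (hK1 : K1 ⊆ K1') (hK1' : K1' ⊆ Q1 \ Q3) (hK2 : K2 ⊆ Q1)
    (hK3' : K3' ⊆ Q3 \ Q1) (hL : L' ⊆ L) (hc1 : c1 ∈ K1) (hc3 : c3 ∈ K3)
    (hc3max : IsMaxVert G (Q1 \ Q3) K3' c3) :
    VertexCompleteTo G v' K1 ∨ ∀ a ∈ K1, ¬ G.Adj v' a := by
  by_contra hcon
  simp only [VertexCompleteTo, not_or, not_forall, not_not] at hcon
  obtain ⟨⟨b, hb, hbv'⟩, a, ha, hav'⟩ := hcon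
  have hinner : ∀ z ∈ K1, ∀ w ∈ I, ¬ G.Adj z w :=
    fun z hz w hw => hp.not_adj_of_minimal hagp hmin (hK1 hz) hw
  have hgp' := hgp.toIsAlmostGoodPartition
  have hpath := hp.isChordlessPath_dropLast
  have huQ := hK3' hp.left_mem
  have hu : u ∈ K3 ∨ u ∈ L := by
    obtain ⟨x, hx, hux⟩ := hpath.exists_adj_of_cons (by simp)
    exact hgp'.mem_K3_or_mem_L (fun h => huQ.2 (hK1' (hK1 h)).1)
      (fun h => huQ.2 (hK2 h)) (hL (hp.mem_of_mem_interior x hx)) hux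
  have hc3L : c3 ∉ L := hgp'.disjoint_K3_L.notMem_of_mem_left hc3
  have huc3 : u ∈ L → G.Adj u c3 := fun huL =>
    hQ3 huQ.1 (hK3' hc3max.1).1 fun h => hc3L (h ▸ huL)
  obtain ⟨x, M, d, hd, hxM, hW, hax, haM⟩ := exists_chordlessPath_to_K3 hpath
    (fun w hw => hL (hp.mem_of_mem_interior w hw)) hu hc3 hc3L huc3 hav'.symm (hinner a ha)
  obtain ⟨t, ht, htc⟩ := hgp.cond3.exists_completeTo_of_path hgp'.disjoint_K1_L
    hgp'.disjoint_K3_L hgp'.disjoint_K1_K3 ha hd (fun w hw => (hxM w hw).2) hW hax haM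
  obtain ⟨htp, htL⟩ := hxM t ht
  simp only [List.cons_append, List.mem_cons, List.mem_append, List.mem_nil_iff, or_false] at htp
  rcases htp with rfl | htI | rfl
  · -- `u` would see `c1 ∈ K1` and `c3 ∈ K3`, while `c1c3` is an edge by maximality of `c3`
    have hc3c1 := hc3max.2 t hp.left_mem c1 (hK1' (hK1 hc1)) (htc hc1)
    exact hgp.anticompleteTo_of_adj_of_adj htL hc1 hc3 (htc hc1) (huc3 htL) hc1 hc3 hc3c1.symm
  · exact hinner c1 hc1 t htI (htc hc1).symm
  · exact hbv' (htc hb)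

theorem IsGoodPartition.not_adj_of_cond3 (hgp : IsGoodPartition G K1 K2 K3 L R)
    (hagp : IsAlmostGoodPartition G K1' K2' K3' L' R') (h3 : Cond3 G K1' K3' L')
    (hK1 : K1 ⊆ K1') (hK3 : K3 ⊆ K3') (hL : L' ⊆ L) (h13 : ¬ AnticompleteTo G K1 K3)
    {u a b : V} (hu : u ∈ L') (ha : a ∈ K1') (hb : b ∈ K3) (hua : G.Adj u a) : ¬ G.Adj u b := by
  intro hub
  have hub' : u ≠ b := fun h => hagp.disjoint_K3_L.notMem_of_mem_left (hK3 hb) (h ▸ hu)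
  obtain ⟨t, ht, htc⟩ := h3.exists_completeTo_of_path (M := []) hagp.disjoint_K1_L
    hagp.disjoint_K3_L hagp.disjoint_K1_K3 ha (hK3 hb) (by simpa using hu)
    (isChordlessPath_cons_cons.2 ⟨hub, by simpa using hub', by simp, by simp⟩) hua.symm (by simp)
  obtain rfl := List.mem_singleton.1 ht
  simp only [AnticompleteTo, not_forall, not_not] at h13
  obtain ⟨c, hc, d, hd, hcd⟩ := h13
  exact hgp.anticompleteTo_of_adj_of_adj (hL hu) hc hb (htc (hK1 hc)) hub hc hd hcd

end FrameStep

theorem frame_refinement_main_step_general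
    {V : Type*} (G : SimpleGraph V)
    (K1 K2 K3 L R : Set V) (hopt : IsOptimalGoodPartition G K1 K2 K3 L R)
    (hK1ne : K1.Nonempty) (hK3ne : K3.Nonempty)
    (Q1 Q3 : Set V) (x y : V) (c1 c3 : V)
    (hframe : IsFrameFor G Q1 Q3 x y {c1} {c3} K1 K2 K3 L R)
    (K1' K2' K3' L' R' : Set V)
    (hagp : IsAlmostGoodPartition G K1' K2' K3' L' R')
    (hL'L : L' ⊆ L)
    (hK1'lo : K1 ⊆ K1') (hK1'hi : K1' ⊆ Q1 \ Q3)
    (hK3'lo : K3 ⊆ K3') (hK3'hi : K3' ⊆ Q3 \ Q1)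
    (hc1 : IsMaxVert G (Q3 \ Q1) K1' c1)
    (hc3 : IsMaxVert G (Q1 \ Q3) K3' c3) :
    (∀ (u v v' : V) (p : List V), u ∈ K3' → v ∈ K1' →
      IsChordlessPath (G.deleteEdges {s(u, v)}) p →
      p.head? = some u → p.getLast? = some v → 3 ≤ p.length →
      (∀ w ∈ interior p, w ∈ L') →
      (∀ w ∈ p, ¬ VertexCompleteTo G w K1') →
      (∀ (u2 v2 : V) (q : List V), u2 ∈ K3' → v2 ∈ K1' →
        IsChordlessPath (G.deleteEdges {s(u2, v2)}) q →
        q.head? = some u2 → q.getLast? = some v2 → 3 ≤ q.length →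
        (∀ w ∈ interior q, w ∈ L') →
        (∀ w ∈ q, ¬ VertexCompleteTo G w K1') → p.length ≤ q.length) →
      p.dropLast.getLast? = some v' →
      ((G.Adj c1 v' → (K1' \ {z | G.Adj v' z}) ∩ K1 = ∅) ∧
       (¬ G.Adj c1 v' → {z | z ∈ K1 ∧ G.Adj v' z} = ∅))) ∧
    (Cond3 G K1' K3' L' →
      (∃ a ∈ K1', ∃ b ∈ K3', G.Adj a b) →
      ∀ u ∈ L', (∃ a ∈ K1', G.Adj u a) → (∃ b ∈ K3', G.Adj u b) →
      ∀ b ∈ K3, ¬ G.Adj u b) := by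
  have hgp := hopt.1
  have hc1K1 := hframe.mem_K1 hK1ne
  have hc3K3 := hframe.mem_K3 hK3ne
  refine ⟨fun u v v' p hu hv hp hhead hlast hlen hint hnc hmin hv' => ?_, ?_⟩
  · obtain ⟨I, rfl⟩ := exists_eq_cons_append_pair hhead hlast hv' hlen
    have hviol : IsCond3Violation G K1' K3' L' u v _ := ⟨hu, hv, hp, hhead, hlast, hlen, hint, hnc⟩
    rcases hviol.completeTo_or_anticompleteTo_of_minimal hgp hagp
      (fun _ _ q hq => hmin _ _ q hq.1 hq.2 hq.3 hq.4 hq.5 hq.6 hq.7 hq.8) hframe.frame.Q3_cl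
      hK1'lo hK1'hi (hframe.K2_eq ▸ Set.inter_subset_left) hK3'hi hL'L hc1K1 hc3K3 hc3
      with hcomp | hanti
    · exact ⟨fun _ => Set.eq_empty_of_forall_notMem fun z ⟨⟨_, hz⟩, hzK1⟩ => hz (hcomp hzK1),
        fun h => absurd (hcomp hc1K1).symm h⟩
    · exact ⟨fun h => absurd h.symm (hanti c1 hc1K1),
        fun _ => Set.eq_empty_of_forall_notMem fun z ⟨hz, hzv⟩ => hanti z hz hzv⟩
  · rintro h3 ⟨e, he, f, hf, hef⟩ u hu ⟨a, ha, hua⟩ - b hb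
    exact hgp.not_adj_of_cond3 hagp h3 hK1'lo hK3'lo hL'L
      (fun h => h hc1K1 hc3K3 (hc1.adj_of_adj hc3 hK1'hi hK3'hi he hf hef)) hu ha hb hua

/-- the main step of the frame-refinement algorithm. -/
theorem frame_refinement_main_step
    {V : Type*} (G : SimpleGraph V) (hsf : SquareFree G)
    (K1 K2 K3 L R : Set V) (hopt : IsOptimalGoodPartition G K1 K2 K3 L R)
    (hK1ne : K1.Nonempty) (hK3ne : K3.Nonempty)
    (Q1 Q3 : Set V) (x y : V) (c1 c3 : V)
    (hframe : IsFrameFor G Q1 Q3 x y {c1} {c3} K1 K2 K3 L R)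
    (K1' K2' K3' L' R' : Set V)
    (hagp : IsAlmostGoodPartition G K1' K2' K3' L' R')
    (hxL' : x ∈ L') (hL'L : L' ⊆ L) (hyR' : y ∈ R')
    (hK1'lo : K1 ⊆ K1') (hK1'hi : K1' ⊆ Q1 \ Q3)
    (hK2'eq : K2 = K2') (hK2'val : K2' = Q1 ∩ Q3)
    (hK3'lo : K3 ⊆ K3') (hK3'hi : K3' ⊆ Q3 \ Q1)
    (hc1 : IsMaxVert G (Q3 \ Q1) K1' c1)
    (hc3 : IsMaxVert G (Q1 \ Q3) K3' c3) :
    (∀ (u v v' : V) (p : List V), u ∈ K3' → v ∈ K1' →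
      IsChordlessPath (G.deleteEdges {s(u, v)}) p →
      p.head? = some u → p.getLast? = some v → 3 ≤ p.length →
      (∀ w ∈ interior p, w ∈ L') →
      (∀ w ∈ p, ¬ VertexCompleteTo G w K1') →
      (∀ (u2 v2 : V) (q : List V), u2 ∈ K3' → v2 ∈ K1' →
        IsChordlessPath (G.deleteEdges {s(u2, v2)}) q →
        q.head? = some u2 → q.getLast? = some v2 → 3 ≤ q.length →
        (∀ w ∈ interior q, w ∈ L') →
        (∀ w ∈ q, ¬ VertexCompleteTo G w K1') → p.length ≤ q.length) →
      p.dropLast.getLast? = some v' →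
      ((G.Adj c1 v' → (K1' \ {z | G.Adj v' z}) ∩ K1 = ∅) ∧
       (¬ G.Adj c1 v' → {z | z ∈ K1 ∧ G.Adj v' z} = ∅))) ∧
    (Cond3 G K1' K3' L' →
      (∃ a ∈ K1', ∃ b ∈ K3', G.Adj a b) →
      ∀ u ∈ L', (∃ a ∈ K1', G.Adj u a) → (∃ b ∈ K3', G.Adj u b) →
      ∀ b ∈ K3, ¬ G.Adj u b) :=
  frame_refinement_main_step_general G K1 K2 K3 L R hopt hK1ne hK3ne Q1 Q3 x y c1 c3 hframe K1' K2'
    K3' L' R' hagp hL'L hK1'lo hK1'hi hK3'lo hK3'hi hc1 hc3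
end Paper
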